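/- There exists a real symmetric trilinear form ψ on ℝ² (corresponding to the state (|001⟩+|010⟩+|100⟩−|111⟩)/2) whose maximum absolute value 1/2 over triples of real unit vectors is attained at a non-symmetric triple of vectors, namely at vectors corresponding to the product state |001⟩; hence the uniqueness part of the main lemma fails over the reals. -/

import Mathlib

/-!
Identify `ℝ²` with `ℂ` via `u ↦ u 0 + u 1 * I`. Then `2 ψ(u, v, w) = Im (u v w)`, which is
symmetric, and `|Im (u v w)| ≤ ‖u‖ ‖v‖ ‖w‖` by multiplicativity of the complex norm. The bound
is attained wherever `u v w = ± I`, for instance at `u = v = 1`, `w = I`.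
-/

open Complex

def vecToComplex (u : Fin 2 → ℝ) : ℂ := ⟨u 0, u 1⟩

lemma im_vecToComplex_mul_mul (u v w : Fin 2 → ℝ) :
    (vecToComplex u * vecToComplex v * vecToComplex w).im =
      u 0 * v 0 * w 1 + u 0 * v 1 * w 0 + u 1 * v 0 * w 0 - u 1 * v 1 * w 1 := by
  simp only [vecToComplex, mul_re, mul_im]
  ring

lemma norm_vecToComplex (u : Fin 2 → ℝ) : ‖vecToComplex u‖ = √(u 0 ^ 2 + u 1 ^ 2) := by
  rw [norm_def, vecToComplex, normSq_mk, sq, sq]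

lemma abs_im_vecToComplex_mul_mul_le_one {u v w : Fin 2 → ℝ} (hu : u 0 ^ 2 + u 1 ^ 2 = 1)
    (hv : v 0 ^ 2 + v 1 ^ 2 = 1) (hw : w 0 ^ 2 + w 1 ^ 2 = 1) :
    |(vecToComplex u * vecToComplex v * vecToComplex w).im| ≤ 1 :=
  calc |(vecToComplex u * vecToComplex v * vecToComplex w).im|
      ≤ ‖vecToComplex u * vecToComplex v * vecToComplex w‖ := abs_im_le_norm _
    _ = 1 := by simp only [norm_mul, norm_vecToComplex, hu, hv, hw, Real.sqrt_one, mul_one]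

theorem stmt_10 :
    ∃ f : (Fin 2 → ℝ) → (Fin 2 → ℝ) → (Fin 2 → ℝ) → ℝ,
      (∀ u v w, f u v w =
        (u 0 * v 0 * w 1 + u 0 * v 1 * w 0 + u 1 * v 0 * w 0
          - u 1 * v 1 * w 1) / 2) ∧
      -- f is symmetric under all permutations of its arguments
      (∀ u v w, f u v w = f v u w ∧ f u v w = f u w v) ∧
      -- the maximum over real unit vectors is 1/2
      IsGreatest {x : ℝ | ∃ u v w : Fin 2 → ℝ,
          u 0 ^ 2 + u 1 ^ 2 = 1 ∧ v 0 ^ 2 + v 1 ^ 2 = 1 ∧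
          w 0 ^ 2 + w 1 ^ 2 = 1 ∧ x = |f u v w|} (1 / 2) ∧
      -- attained at the non-symmetric triple u = v = (1,0), w = (0,1)
      |f ![1, 0] ![1, 0] ![0, 1]| = 1 / 2 ∧
      (![0, 1] : Fin 2 → ℝ) ≠ ![1, 0] ∧ (![0, 1] : Fin 2 → ℝ) ≠ -![1, 0] := by
  let f u v w := (vecToComplex u * vecToComplex v * vecToComplex w).im / 2
  have hf : ∀ u v w, f u v w = (u 0 * v 0 * w 1 + u 0 * v 1 * w 0 + u 1 * v 0 * w 0
      - u 1 * v 1 * w 1) / 2 := fun u v w => by simp only [f, im_vecToComplex_mul_mul]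
  have hattained : |f ![1, 0] ![1, 0] ![0, 1]| = 1 / 2 := by norm_num [hf]
  refine ⟨f, hf, fun u v w => ⟨by simp only [f, mul_comm (vecToComplex u)],
    by simp only [f, mul_assoc, mul_comm (vecToComplex v)]⟩, ⟨?_, ?_⟩, hattained, ?_, ?_⟩
  · exact ⟨_, _, _, by norm_num, by norm_num, by norm_num, hattained.symm⟩
  · rintro _ ⟨u, v, w, hu, hv, hw, rfl⟩
    rw [abs_div, abs_two]
    gcongr
    exact abs_im_vecToComplex_mul_mul_le_one hu hv hw
  · exact fun h => by simpa using congrFun h 0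
  · exact fun h => by simpa using congrFun h 0
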